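/- arXiv:2202.02765 — 2 statements merged into one kernel-verified Lean document; each statement's English description precedes it below -/
import Mathlib

section
/- Let X be a d×d positive definite Hermitian matrix and P a d×d positive semidefinite Hermitian matrix, and let P' := P + X^{-1/2}(I_d − X^{1/2} P X^{1/2})_+ X^{-1/2}. Then P' is positive definite (hence invertible) and Tr(X(P' − P)) = Tr(P'^{-1}(P' − P)). -/
open Matrix
open scoped ComplexOrder

/-- The positive part `M₊` of a Hermitian matrix: keep the spectral decomposition but set
all negative eigenvalues to zero (junk value `0` if `M` is not Hermitian). -/
noncomputable def matPosPart {d : ℕ} (M : Matrix (Fin d) (Fin d) ℂ) :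
    Matrix (Fin d) (Fin d) ℂ :=
  if hM : M.IsHermitian then
    (hM.eigenvectorUnitary : Matrix (Fin d) (Fin d) ℂ) *
      Matrix.diagonal (fun i => ((max (hM.eigenvalues i) 0 : ℝ) : ℂ)) *
      star (hM.eigenvectorUnitary : Matrix (Fin d) (Fin d) ℂ)
  else 0

/-!
Write `A = S P S` and `M = 1 - A`, so that `S P' S = A + M₊ = 1 + (M₊ - M)`. The matrix `M₊ - M`
is the negative part of `M`: it is positive semidefinite, which makes `P'` positive definite, and
it annihilates `M₊`, so `(S P' S)⁻¹ M₊ = M₊`. Hence `X (P' - P)` and `P'⁻¹ (P' - P)` are both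
equal to `S M₊ S⁻¹`.
-/

open scoped MatrixOrder

section matPosPart

variable {d : ℕ} {M : Matrix (Fin d) (Fin d) ℂ}

lemma matPosPart_eq_cfc (hM : M.IsHermitian) : matPosPart M = cfc (fun x : ℝ => max x 0) M := by
  rw [hM.cfc_eq, IsHermitian.cfc, Unitary.conjStarAlgAut_apply, matPosPart, dif_pos hM]
  rfl

lemma matPosPart_sub_self_eq_cfc (hM : M.IsHermitian) :
    matPosPart M - M = cfc (fun x : ℝ => max (-x) 0) M := by
  have hneg : cfc (fun x : ℝ => max (-x) 0) M = cfc (fun x : ℝ => max x 0 - x) M :=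
    cfc_congr fun x _ => by rw [← max_sub_sub_right, sub_self, zero_sub, max_comm]
  rw [hneg, cfc_sub .., cfc_id' ℝ M, matPosPart_eq_cfc hM]

lemma posSemidef_matPosPart_sub_self (hM : M.IsHermitian) : (matPosPart M - M).PosSemidef := by
  rw [← nonneg_iff_posSemidef, matPosPart_sub_self_eq_cfc hM]
  exact cfc_nonneg fun x _ => le_max_right _ _

lemma matPosPart_sub_self_mul_matPosPart (hM : M.IsHermitian) :
    (matPosPart M - M) * matPosPart M = 0 := by
  rw [matPosPart_sub_self_eq_cfc hM, matPosPart_eq_cfc hM, ← cfc_mul .., ← cfc_zero ℝ M]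
  refine cfc_congr fun x _ => ?_
  rcases le_total x 0 with hx | hx <;> simp [hx]

end matPosPart

section

variable {d : ℕ} {A : Matrix (Fin d) (Fin d) ℂ}

lemma add_matPosPart_one_sub_eq :
    A + matPosPart (1 - A) = 1 + (matPosPart (1 - A) - (1 - A)) := by
  abel

lemma posDef_add_matPosPart_one_sub (hA : A.IsHermitian) : (A + matPosPart (1 - A)).PosDef := by
  rw [add_matPosPart_one_sub_eq]
  exact PosDef.one.add_posSemidef (posSemidef_matPosPart_sub_self (isHermitian_one.sub hA))

lemma inv_add_matPosPart_one_sub_mul_matPosPart (hA : A.IsHermitian) :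
    (A + matPosPart (1 - A))⁻¹ * matPosPart (1 - A) = matPosPart (1 - A) := by
  have hdet := (isUnit_iff_isUnit_det _).mp (posDef_add_matPosPart_one_sub hA).isUnit
  have hfix : (A + matPosPart (1 - A)) * matPosPart (1 - A) = matPosPart (1 - A) := by
    rw [add_matPosPart_one_sub_eq, add_mul, one_mul,
      matPosPart_sub_self_mul_matPosPart (isHermitian_one.sub hA), add_zero]
  calc (A + matPosPart (1 - A))⁻¹ * matPosPart (1 - A)
      = (A + matPosPart (1 - A))⁻¹ * ((A + matPosPart (1 - A)) * matPosPart (1 - A)) := by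
        rw [hfix]
    _ = matPosPart (1 - A) := nonsing_inv_mul_cancel_left _ _ hdet

end

theorem stmt5_general (d : ℕ) (X P S P' : Matrix (Fin d) (Fin d) ℂ)
    (hP : P.PosSemidef)
    (hS : S.PosDef) (hSX : S * S = X)
    (hP' : P' = P + S⁻¹ * matPosPart (1 - S * P * S) * S⁻¹) :
    P'.PosDef ∧ (X * (P' - P)).trace = (P'⁻¹ * (P' - P)).trace := by
  have hA : (S * P * S).IsHermitian := by
    simpa only [hS.1.eq] using isHermitian_conjTranspose_mul_mul S hP.1
  set A := S * P * S with hAdef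
  set Q := A + matPosPart (1 - A)
  have hdet : IsUnit S.det := (isUnit_iff_isUnit_det S).mp hS.isUnit
  have hP'Q : P' = S⁻¹ * Q * S⁻¹ := by
    rw [hP', mul_add, add_mul, hAdef, ← mul_assoc, ← mul_assoc, nonsing_inv_mul _ hdet, one_mul,
      mul_nonsing_inv_cancel_right _ _ hdet]
  have hdiff : P' - P = S⁻¹ * matPosPart (1 - A) * S⁻¹ := by rw [hP', add_sub_cancel_left]
  refine ⟨?_, congrArg trace ?_⟩
  · have := (posDef_add_matPosPart_one_sub hA).conjTranspose_mul_mul_same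
      (mulVec_injective_of_isUnit hS.inv.isUnit)
    rwa [hS.1.inv.eq, ← hP'Q] at this
  · calc X * (P' - P) = S * matPosPart (1 - A) * S⁻¹ := by
          rw [hdiff, ← hSX]
          simp only [mul_assoc, mul_nonsing_inv_cancel_left _ _ hdet]
      _ = S * (Q⁻¹ * matPosPart (1 - A)) * S⁻¹ := by
          rw [inv_add_matPosPart_one_sub_mul_matPosPart hA]
      _ = P'⁻¹ * (P' - P) := by
          rw [hdiff, hP'Q, Matrix.mul_inv_rev, Matrix.mul_inv_rev, nonsing_inv_nonsing_inv _ hdet]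
          simp only [mul_assoc, mul_nonsing_inv_cancel_left _ _ hdet]

/-- Let `X` be PD Hermitian, `P` PSD Hermitian, and
`P' := P + X^{-1/2}(I − X^{1/2} P X^{1/2})₊ X^{-1/2}`. Then `P'` is positive definite
(hence invertible) and `Tr(X(P' − P)) = Tr(P'⁻¹(P' − P))`.
Here `S` denotes the (unique) PD square root `X^{1/2}` of `X`. -/
theorem stmt5 (d : ℕ) (X P S P' : Matrix (Fin d) (Fin d) ℂ)
    (hX : X.PosDef) (hP : P.PosSemidef)
    (hS : S.PosDef) (hSX : S * S = X)
    (hP' : P' = P + S⁻¹ * matPosPart (1 - S * P * S) * S⁻¹) :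
    P'.PosDef ∧ (X * (P' - P)).trace = (P'⁻¹ * (P' - P)).trace :=
  stmt5_general d X P S P' hP hS hSX hP'
end

section
/- Let d ≥ 1 be an integer, T ≥ 1 a real number, and let P₀ ⪯ P₁ ⪯ ⋯ ⪯ P_L be d×d positive definite Hermitian matrices with P₀ = d·I_d and P_L ⪯ T²·I_d. Then Σ_{τ=1}^{L} Tr(P_τ^{-1}(P_τ − P_{τ−1})) ≤ 2d·log T. -/
/-!
For positive definite `A`, `B`, conjugating by `S = A^{-1/2}` turns `Tr(A⁻¹(A - B))` into
`Σᵢ (1 - μᵢ)`, where `μᵢ` are the eigenvalues of `S B S`, whose product is `det B / det A`;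
so `log x ≤ x - 1` gives `Tr(A⁻¹(A - B)) ≤ log det A - log det B`. The sum therefore telescopes
to at most `log det P_L - log det P₀ ≤ d log T² - d log d`, where the upper bound on `det P_L`
is the same inequality applied to `A = T² I`, `B = P_L`, whose left side is then nonnegative.
-/

open Matrix
open scoped ComplexOrder

namespace Matrix

variable {n 𝕜 : Type*} [Fintype n] [DecidableEq n] [RCLike 𝕜]

lemma PosDef.ofReal_re_det {A : Matrix n n 𝕜} (hA : A.PosDef) :
    ((RCLike.re A.det : ℝ) : 𝕜) = A.det := by
  obtain ⟨x, -, hx⟩ := RCLike.pos_iff_exists_ofReal.mp hA.det_pos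
  rw [← hx, RCLike.ofReal_re]

lemma PosDef.re_det_pos {A : Matrix n n 𝕜} (hA : A.PosDef) : 0 < RCLike.re A.det :=
  (RCLike.pos_iff.mp hA.det_pos).1

lemma re_det_real_smul_one (c : ℝ) :
    RCLike.re (c • (1 : Matrix n n 𝕜)).det = c ^ Fintype.card n := by
  rw [RCLike.real_smul_eq_coe_smul (K := 𝕜), det_smul, det_one, mul_one, ← RCLike.ofReal_pow,
    RCLike.ofReal_re]

open scoped MatrixOrder in
lemma PosSemidef.trace_mul_nonneg {A B : Matrix n n 𝕜} (hA : A.PosSemidef)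
    (hB : B.PosSemidef) : 0 ≤ (A * B).trace := by
  obtain ⟨X, rfl⟩ := CStarAlgebra.nonneg_iff_eq_star_mul_self.mp hA.nonneg
  rw [mul_assoc, trace_mul_comm, mul_assoc]
  simpa [mul_assoc, star_eq_conjTranspose] using (hB.mul_mul_conjTranspose_same X).trace_nonneg

lemma PosDef.log_re_det_le_re_trace_sub_one {C : Matrix n n 𝕜} (hC : C.PosDef) :
    Real.log (RCLike.re C.det) ≤ RCLike.re (C - 1).trace := by
  have hμ := hC.eigenvalues_pos
  rw [hC.isHermitian.det_eq_prod_eigenvalues, trace_sub, trace_one,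
    hC.isHermitian.trace_eq_sum_eigenvalues, ← RCLike.ofReal_prod, RCLike.ofReal_re,
    Real.log_prod fun i _ => (hμ i).ne']
  simp only [map_sub, map_sum, RCLike.ofReal_re, RCLike.one_re, Fintype.card_eq_sum_ones,
    Nat.cast_sum, Nat.cast_one, ← Finset.sum_sub_distrib]
  exact Finset.sum_le_sum fun i _ => Real.log_le_sub_one_of_pos (hμ i)

open scoped MatrixOrder in
lemma PosDef.re_trace_inv_mul_sub_le_log_det {A B : Matrix n n 𝕜} (hA : A.PosDef)
    (hB : B.PosDef) :
    RCLike.re (A⁻¹ * (A - B)).trace ≤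
      Real.log (RCLike.re A.det) - Real.log (RCLike.re B.det) := by
  set S := CFC.sqrt A⁻¹
  have hS : S.IsHermitian := (CFC.sqrt_nonneg A⁻¹).posSemidef.isHermitian
  have hSS : S * S = A⁻¹ := CFC.sqrt_mul_sqrt_self A⁻¹ hA.inv.posSemidef.nonneg
  have hSunit : IsUnit S := isUnit_of_mul_isUnit_left (hSS ▸ hA.inv.isUnit)
  set C := S * B * S
  have hC : C.PosDef := by
    have := (IsUnit.posDef_star_left_conjugate_iff hSunit).mpr hB
    rwa [star_eq_conjTranspose, hS.eq] at this
  have htrace : (A⁻¹ * (A - B)).trace = -(C - 1).trace := by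
    rw [mul_sub, nonsing_inv_mul A ((isUnit_iff_isUnit_det A).mp hA.isUnit), trace_sub,
      trace_sub, trace_mul_cycle, hSS, neg_sub]
  have hdet : RCLike.re C.det = (RCLike.re A.det)⁻¹ * RCLike.re B.det := by
    apply RCLike.ofReal_injective (K := 𝕜)
    rw [RCLike.ofReal_mul, RCLike.ofReal_inv, hA.ofReal_re_det, hB.ofReal_re_det,
      hC.ofReal_re_det, det_mul, det_mul, mul_comm, ← mul_assoc, ← det_mul, hSS,
      det_nonsing_inv, Ring.inverse_eq_inv']
  have hlog := hC.log_re_det_le_re_trace_sub_one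
  rw [hdet, Real.log_mul (inv_pos.2 hA.re_det_pos).ne' hB.re_det_pos.ne', Real.log_inv] at hlog
  rw [htrace, map_neg]
  linarith

lemma PosDef.log_re_det_le_of_posSemidef_sub {A B : Matrix n n 𝕜} (hB : B.PosDef)
    (hAB : (A - B).PosSemidef) : Real.log (RCLike.re B.det) ≤ Real.log (RCLike.re A.det) := by
  have hA : A.PosDef := by simpa using hB.add_posSemidef hAB
  have htrace : 0 ≤ RCLike.re (A⁻¹ * (A - B)).trace :=
    (RCLike.nonneg_iff.mp (hA.inv.posSemidef.trace_mul_nonneg hAB)).1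
  linarith [hA.re_trace_inv_mul_sub_le_log_det hB]

lemma sum_re_trace_inv_mul_sub_le_log_det (P : ℕ → Matrix n n 𝕜) (L : ℕ)
    (hP : ∀ τ ≤ L, (P τ).PosDef) :
    ∑ τ ∈ Finset.Icc 1 L, RCLike.re ((P τ)⁻¹ * (P τ - P (τ - 1))).trace ≤
      Real.log (RCLike.re (P L).det) - Real.log (RCLike.re (P 0).det) := by
  induction L with
  | zero => simp
  | succ L ih =>
    rw [Finset.sum_Icc_succ_top (Nat.le_add_left 1 L), Nat.add_sub_cancel]
    linarith [ih fun τ hτ => hP τ (hτ.trans L.le_succ),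
      (hP (L + 1) le_rfl).re_trace_inv_mul_sub_le_log_det (hP L L.le_succ)]

end Matrix

theorem stmt10_general (d : ℕ) (T : ℝ) (L : ℕ)
    (P : ℕ → Matrix (Fin d) (Fin d) ℂ)
    (hpd : ∀ τ, τ ≤ L → (P τ).PosDef)
    (hP0 : P 0 = (d : ℂ) • (1 : Matrix (Fin d) (Fin d) ℂ))
    (hPL : ((T ^ 2) • (1 : Matrix (Fin d) (Fin d) ℂ) - P L).PosSemidef) :
    ∑ τ ∈ Finset.Icc 1 L, ((P τ)⁻¹ * (P τ - P (τ - 1))).trace.re ≤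
      2 * d * Real.log T := by
  have hsum := sum_re_trace_inv_mul_sub_le_log_det P L hpd
  have hPL_le := (hpd L le_rfl).log_re_det_le_of_posSemidef_sub hPL
  rw [hP0, ← Complex.ofReal_natCast, Complex.coe_smul, re_det_real_smul_one, Fintype.card_fin,
    Real.log_pow] at hsum
  rw [re_det_real_smul_one, Fintype.card_fin, Real.log_pow, Real.log_pow] at hPL_le
  simp only [RCLike.re_to_complex, Nat.cast_ofNat] at hsum hPL_le
  have hlog_d : 0 ≤ (d : ℝ) * Real.log d := mul_nonneg d.cast_nonneg (Real.log_natCast_nonneg d)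
  linarith

/-- Let `d ≥ 1`, `T ≥ 1` real, and `P₀ ⪯ P₁ ⪯ ⋯ ⪯ P_L` PD Hermitian with
`P₀ = d·I` and `P_L ⪯ T²·I`. Then `Σ_{τ=1}^{L} Tr(P_τ⁻¹(P_τ − P_{τ−1})) ≤ 2d·log T`. -/
theorem stmt10 (d : ℕ) (hd : 1 ≤ d) (T : ℝ) (hT : 1 ≤ T) (L : ℕ)
    (P : ℕ → Matrix (Fin d) (Fin d) ℂ)
    (hpd : ∀ τ, τ ≤ L → (P τ).PosDef)
    (hmono : ∀ τ, τ < L → (P (τ + 1) - P τ).PosSemidef)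
    (hP0 : P 0 = (d : ℂ) • (1 : Matrix (Fin d) (Fin d) ℂ))
    (hPL : ((T ^ 2) • (1 : Matrix (Fin d) (Fin d) ℂ) - P L).PosSemidef) :
    ∑ τ ∈ Finset.Icc 1 L, ((P τ)⁻¹ * (P τ - P (τ - 1))).trace.re ≤
      2 * d * Real.log T :=
  stmt10_general d T L P hpd hP0 hPL
end
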